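/- Let H be a finite dimensional Hopf algebra over a field k of characteristic p > 0 and A a commutative H-module algebra. If A/N is integral over (A/N)^H where N is an H-stable nil ideal with A/N H-semiprime, then A is integral over A^H. More specifically: if π : A → B is a surjection of commutative H-module algebras with nil kernel and B is integral over B^H, then A is integral over A^H. -/

import Mathlib

open TensorProduct

variable {k : Type*} [Field k]
variable {K : Type*} [Ring K] [HopfAlgebra k K] [FiniteDimensional k K]
variable {A : Type*} [CommRing A] [Algebra k A]

/-- `ρ` makes `A` into a (right) `K`-comodule algebra; for `K = H*` the dual of a finite
dimensional Hopf algebra `H`, this is the same thing as an `H`-module algebra structure,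
with `ρ(a)(h) = ha` under `A ⊗ H* ≅ Hom(H, A)`. -/
structure IsComoduleAlgebra (ρ : A →ₐ[k] A ⊗[k] K) : Prop where
  coassoc : ∀ a : A,
    (TensorProduct.assoc k A K K) ((TensorProduct.map ρ.toLinearMap LinearMap.id) (ρ a)) =
      (TensorProduct.map LinearMap.id (Coalgebra.comul (R := k) (A := K))) (ρ a)
  counit_id : ∀ a : A,
    (TensorProduct.rid k A)
      ((TensorProduct.map LinearMap.id (Coalgebra.counit (R := k) (A := K))) (ρ a)) = a

/-- The subalgebra of coinvariants `A^{co K}`; for `K = H*` this is the invariant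
subalgebra `A^H`. -/
def coinvariants (ρ : A →ₐ[k] A ⊗[k] K) : Subalgebra k A where
  carrier := {a | ρ a = a ⊗ₜ[k] 1}
  one_mem' := by
    simp only [Set.mem_setOf_eq, map_one, Algebra.TensorProduct.one_def]
  mul_mem' := by
    intro a b ha hb
    simp only [Set.mem_setOf_eq] at ha hb ⊢
    rw [map_mul, ha, hb, Algebra.TensorProduct.tmul_mul_tmul, mul_one]
  add_mem' := by
    intro a b ha hb
    simp only [Set.mem_setOf_eq] at ha hb ⊢
    rw [map_add, ha, hb, TensorProduct.add_tmul]
  algebraMap_mem' := by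
    intro r
    show ρ (algebraMap k A r) = (algebraMap k A r) ⊗ₜ[k] 1
    rw [AlgHom.commutes, Algebra.TensorProduct.algebraMap_apply]


variable {B : Type*} [CommRing B] [Algebra k B]

section Aux

variable {R T : Type*} [CommRing R] [Ring T] [Algebra R T]

lemma aux_isNilpotent_span_finset (s : Finset R) (h : ∀ x ∈ s, IsNilpotent x) :
    IsNilpotent (Ideal.span (s : Set R)) := by
  classical
  induction s using Finset.induction_on with
  | empty => exact ⟨1, by simp [Ideal.zero_eq_bot]⟩
  | @insert a s' _ ih =>
    have h1 : IsNilpotent (Ideal.span ({a} : Set R)) := by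
      obtain ⟨n, hn⟩ := h a (Finset.mem_insert_self a s')
      exact ⟨n, by rw [Ideal.span_singleton_pow, hn, Ideal.zero_eq_bot,
        Ideal.span_singleton_eq_bot]⟩
    have h2 : IsNilpotent (Ideal.span (s' : Set R)) :=
      ih fun x hxs => h x (Finset.mem_insert_of_mem hxs)
    have hins : Ideal.span ((insert a s' : Finset R) : Set R)
        = Ideal.span ({a} : Set R) + Ideal.span (s' : Set R) := by
      rw [Finset.coe_insert, Ideal.span_insert, Submodule.add_eq_sup]
    rw [hins]
    exact (Commute.all _ _).isNilpotent_add h1 h2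

lemma aux_mul_mem_smul_top {I J : Ideal R} {x y : T}
    (hx : x ∈ I • (⊤ : Submodule R T)) (hy : y ∈ J • (⊤ : Submodule R T)) :
    x * y ∈ (I * J) • (⊤ : Submodule R T) := by
  refine Submodule.smul_induction_on hx (fun r hr u _ => ?_)
    (fun x₁ x₂ h₁ h₂ => by rw [add_mul]; exact Submodule.add_mem _ h₁ h₂)
  refine Submodule.smul_induction_on hy (fun s hs v _ => ?_)
    (fun y₁ y₂ h₁ h₂ => by rw [mul_add]; exact Submodule.add_mem _ h₁ h₂)
  rw [smul_mul_smul_comm]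
  exact Submodule.smul_mem_smul (Ideal.mul_mem_mul hr hs) trivial

lemma aux_pow_mem_smul_top {I : Ideal R} {x : T}
    (hx : x ∈ I • (⊤ : Submodule R T)) (n : ℕ) :
    x ^ (n + 1) ∈ (I ^ (n + 1)) • (⊤ : Submodule R T) := by
  induction n with
  | zero => simpa using hx
  | succ n ih =>
    have := aux_mul_mem_smul_top ih hx
    rw [← pow_succ, ← pow_succ] at this
    exact this

lemma aux_isNilpotent_of_mem_smul_top {I : Ideal R} (hI : IsNilpotent I) {x : T}
    (hx : x ∈ I • (⊤ : Submodule R T)) : IsNilpotent x := by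
  obtain ⟨n, hn⟩ := hI
  refine ⟨n + 1, ?_⟩
  have hmem := aux_pow_mem_smul_top hx n
  have hI1 : I ^ (n + 1) = ⊥ := by
    rw [pow_succ, hn, zero_mul, Ideal.zero_eq_bot]
  rw [hI1, Submodule.bot_smul, Submodule.mem_bot] at hmem
  exact hmem

end Aux

/-- Elements of the kernel of `π ⊗ id` are nilpotent when `ker π` is nil. -/
lemma aux_nilpotent_of_map_eq_zero (π : A →ₐ[k] B) (hsurj : Function.Surjective π)
    (hnil : ∀ a : A, π a = 0 → IsNilpotent a) (d : A ⊗[k] K)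
    (hd : (TensorProduct.map π.toLinearMap (LinearMap.id (R := k) (M := K))) d = 0) :
    IsNilpotent d := by
  classical
  have hexact := rTensor_exact (R := k) K
    (LinearMap.exact_subtype_ker_map π.toLinearMap) hsurj
  have hmem : d ∈ Set.range (LinearMap.rTensor K (LinearMap.ker π.toLinearMap).subtype) :=
    (hexact d).mp hd
  obtain ⟨y, hy⟩ := hmem
  obtain ⟨S, rfl⟩ := TensorProduct.exists_finset y
  set I : Ideal A := Ideal.span ((S.image fun q => (q.1 : A)) : Set A) with hI
  have hInil : IsNilpotent I := by
    apply aux_isNilpotent_span_finset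
    intro x hx
    obtain ⟨q, _, rfl⟩ := Finset.mem_image.mp hx
    exact hnil _ (LinearMap.mem_ker.mp q.1.2)
  apply aux_isNilpotent_of_mem_smul_top hInil
  rw [← hy, map_sum]
  apply Submodule.sum_mem
  intro q hq
  rw [LinearMap.rTensor_tmul]
  have hqt : ((((LinearMap.ker π.toLinearMap).subtype q.1 : A)) ⊗ₜ[k] q.2 : A ⊗[k] K)
      = (q.1 : A) • ((1 : A) ⊗ₜ[k] q.2) := by
    rw [TensorProduct.smul_tmul', smul_eq_mul, mul_one]
    rfl
  rw [hqt]
  exact Submodule.smul_mem_smul (Ideal.subset_span (Finset.mem_image.mpr ⟨q, hq, rfl⟩))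
    Submodule.mem_top

/-- A `p`-power of a lift of a coinvariant element is coinvariant. -/
lemma aux_pow_mem_coinvariants [Nontrivial (A ⊗[k] K)]
    (p : ℕ) [Fact p.Prime] [CharP k p]
    (ρA : A →ₐ[k] A ⊗[k] K) (ρB : B →ₐ[k] B ⊗[k] K)
    (π : A →ₐ[k] B) (hsurj : Function.Surjective π)
    (hequiv : ∀ a : A,
      (TensorProduct.map π.toLinearMap (LinearMap.id (R := k) (M := K))) (ρA a) = ρB (π a))
    (hnil : ∀ a : A, π a = 0 → IsNilpotent a)
    (c : A) (hc : ρB (π c) = (π c) ⊗ₜ[k] 1) :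
    ∃ e : ℕ, ρA (c ^ p ^ e) = (c ^ p ^ e) ⊗ₜ[k] 1 := by
  haveI : CharP (A ⊗[k] K) p :=
    charP_of_injective_algebraMap (algebraMap k (A ⊗[k] K)).injective p
  set d : A ⊗[k] K := ρA c - c ⊗ₜ[k] 1 with hdd
  have hd0 : (TensorProduct.map π.toLinearMap (LinearMap.id (R := k) (M := K))) d = 0 := by
    rw [hdd, map_sub, hequiv, TensorProduct.map_tmul, hc]
    simp
  obtain ⟨m, hm⟩ := aux_nilpotent_of_map_eq_zero π hsurj hnil d hd0
  obtain ⟨e, he⟩ : ∃ e : ℕ, m ≤ p ^ e :=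
    ⟨m, (Nat.lt_pow_self (n := m) (Fact.out (p := p.Prime)).one_lt).le⟩
  refine ⟨e, ?_⟩
  have hde : d ^ p ^ e = 0 := pow_eq_zero_of_le he hm
  have hcomm : Commute ((c ⊗ₜ[k] (1 : K)) : A ⊗[k] K) d := by
    have h1 : ((c ⊗ₜ[k] (1 : K)) : A ⊗[k] K) = algebraMap A (A ⊗[k] K) c := by
      rw [Algebra.TensorProduct.algebraMap_apply]
      rfl
    rw [h1]
    exact Algebra.commutes c d
  calc ρA (c ^ p ^ e) = (ρA c) ^ p ^ e := map_pow _ _ _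
    _ = (c ⊗ₜ[k] 1 + d) ^ p ^ e := by rw [hdd, add_sub_cancel]
    _ = (c ⊗ₜ[k] 1) ^ p ^ e + d ^ p ^ e := add_pow_char_pow_of_commute p e hcomm
    _ = (c ^ p ^ e) ⊗ₜ[k] 1 := by
        rw [hde, add_zero, Algebra.TensorProduct.tmul_pow, one_pow]

set_option maxHeartbeats 1000000 in
set_option synthInstance.maxHeartbeats 400000 in
/-- let `k` be a field of characteristic `p > 0`, `H` a finite dimensional
Hopf algebra over `k` (with `K = H*`), and `π : A → B` a surjective homomorphism of
commutative `H`-module algebras with nil kernel.  If `B` is integral over `B^H`, then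
`A` is integral over `A^H`. -/
theorem integral_over_invariants_of_nil_kernel
    (p : ℕ) [Fact p.Prime] [CharP k p]
    (ρA : A →ₐ[k] A ⊗[k] K) (hcoA : IsComoduleAlgebra ρA)
    (ρB : B →ₐ[k] B ⊗[k] K) (hcoB : IsComoduleAlgebra ρB)
    (π : A →ₐ[k] B) (hsurj : Function.Surjective π)
    (hequiv : ∀ a : A,
      (TensorProduct.map π.toLinearMap (LinearMap.id (R := k) (M := K))) (ρA a) = ρB (π a))
    (hnil : ∀ a : A, π a = 0 → IsNilpotent a)
    (hBint : Algebra.IsIntegral ↥(coinvariants ρB) B) :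
    Algebra.IsIntegral ↥(coinvariants ρA) A := by
  classical
  rcases subsingleton_or_nontrivial A with hA | hA
  · exact ⟨fun a => ⟨Polynomial.X, Polynomial.monic_X, Subsingleton.elim _ _⟩⟩
  haveI : Nontrivial B := by
    rcases subsingleton_or_nontrivial B with hB | hB
    · obtain ⟨n, h1⟩ := hnil 1 (Subsingleton.elim _ _)
      rw [one_pow] at h1
      exact absurd h1 one_ne_zero
    · exact hB
  haveI : Nontrivial K := by
    rcases subsingleton_or_nontrivial K with hK | hK
    · have h0 : (Bialgebra.counitAlgHom k K) 1 = 1 := map_one _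
      rw [Subsingleton.elim (1 : K) 0, map_zero] at h0
      exact absurd h0.symm one_ne_zero
    · exact hK
  haveI : Nontrivial (A ⊗[k] K) := inferInstance
  refine ⟨fun a => ?_⟩
  obtain ⟨f, hfm, hfeval⟩ := hBint.isIntegral (π a)
  set F : Polynomial B := f.map (algebraMap ↥(coinvariants ρB) B) with hF
  have hFm : F.Monic := hfm.map _
  have hFlifts : F ∈ Polynomial.lifts (π : A →+* B) := by
    rw [Polynomial.lifts_iff_coeff_lifts]
    intro n
    exact hsurj _
  obtain ⟨g, hgmap, hgdeg, hgm⟩ := Polynomial.lifts_and_natDegree_eq_and_monic hFlifts hFm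
  have hcoeff : ∀ n, ρB (π (g.coeff n)) = (π (g.coeff n)) ⊗ₜ[k] 1 := by
    intro n
    have h1 : π (g.coeff n) = F.coeff n := by
      rw [← hgmap, Polynomial.coeff_map]
      rfl
    have h2 : F.coeff n ∈ coinvariants ρB := by
      rw [hF, Polynomial.coeff_map]
      exact (f.coeff n).2
    rw [h1]
    exact h2
  have hge : π (g.eval a) = 0 := by
    have h1 : π (g.eval a) = (g.map (π : A →+* B)).eval (π a) := by
      rw [Polynomial.eval_map]
      exact (Polynomial.eval₂_hom (π : A →+* B) a).symm
    rw [h1, hgmap, hF, Polynomial.eval_map]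
    exact hfeval
  obtain ⟨m, hm⟩ := hnil _ hge
  have hcoefInt : ∀ x ∈ (g.coeffs : Set A), IsIntegral ↥(coinvariants ρA) x := by
    intro x hx
    obtain ⟨n, _, rfl⟩ := Polynomial.mem_coeffs_iff.mp hx
    obtain ⟨e, he⟩ := aux_pow_mem_coinvariants p ρA ρB π hsurj hequiv hnil
      (g.coeff n) (hcoeff n)
    have hpe : p ^ e ≠ 0 := pow_ne_zero e (Fact.out (p := p.Prime)).ne_zero
    refine ⟨Polynomial.X ^ p ^ e -
      Polynomial.C (⟨(g.coeff n) ^ p ^ e, he⟩ : ↥(coinvariants ρA)),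
      Polynomial.monic_X_pow_sub_C _ hpe, ?_⟩
    have hmap : (algebraMap ↥(coinvariants ρA) A)
        (⟨(g.coeff n) ^ p ^ e, he⟩ : ↥(coinvariants ρA)) = (g.coeff n) ^ p ^ e := rfl
    simp [hmap]
  set S := Algebra.adjoin ↥(coinvariants ρA) ((g.coeffs : Set A)) with hS
  haveI : Module.Finite ↥(coinvariants ρA) ↥S :=
    Module.Finite.iff_fg.mpr (fg_adjoin_of_finite g.coeffs.finite_toSet hcoefInt)
  haveI : Algebra.IsIntegral ↥(coinvariants ρA) ↥S := Algebra.IsIntegral.of_finite _ _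
  have hglifts : g ∈ Polynomial.lifts (algebraMap ↥S A) := by
    rw [Polynomial.lifts_iff_coeff_lifts]
    intro n
    by_cases hzero : g.coeff n = 0
    · exact ⟨0, by rw [map_zero, hzero]⟩
    · have hmemS : g.coeff n ∈ S :=
        Algebra.subset_adjoin (Polynomial.coeff_mem_coeffs hzero)
      exact ⟨⟨g.coeff n, hmemS⟩, rfl⟩
  obtain ⟨G, hGmap, _, hGm⟩ := Polynomial.lifts_and_natDegree_eq_and_monic hglifts hgm
  have haInt : IsIntegral ↥S a := by
    refine ⟨G ^ m, hGm.pow m, ?_⟩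
    have h1 : Polynomial.eval₂ (algebraMap ↥S A) a (G ^ m) = (g.eval a) ^ m := by
      rw [← Polynomial.eval_map, Polynomial.map_pow, hGmap, Polynomial.eval_pow]
    rw [h1, hm]
  exact isIntegral_trans a haInt
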